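/- For jointly distributed finite discrete random variables, conditional entropy satisfies the chain and monotonicity bounds needed for the Braunstein–Caves derivation: H(X₀|Y₀) ≤ H(X₀|Y₁) + H(Y₁|X₁) + H(X₁|Y₀). -/
import Mathlib


open Finset

/-- Probability that the random variable `X` takes value `x`, for weights `μ`. -/
noncomputable def prob {Ω α : Type} [Fintype Ω] [Fintype α] [DecidableEq α]
    (μ : Ω → ℝ) (X : Ω → α) (x : α) : ℝ :=
  ∑ ω, if X ω = x then μ ω else 0

/-- Shannon entropy (base 2) of a finite discrete random variable,
with the convention `0 * log₂ 0 = 0` (since `Real.logb 2 0 = 0`). -/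
noncomputable def ent {Ω α : Type} [Fintype Ω] [Fintype α] [DecidableEq α]
    (μ : Ω → ℝ) (X : Ω → α) : ℝ :=
  -∑ x, prob μ X x * Real.logb 2 (prob μ X x)

/-- `μ` is a probability mass function on the finite sample space `Ω`. -/
def IsPMF {Ω : Type} [Fintype Ω] (μ : Ω → ℝ) : Prop :=
  (∀ ω, 0 ≤ μ ω) ∧ ∑ ω, μ ω = 1

/-- Mutual information `I(X:Y) = H(X) + H(Y) - H(X,Y)`. -/
noncomputable def mutualInfo {Ω α β : Type} [Fintype Ω] [Fintype α] [Fintype β]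
    [DecidableEq α] [DecidableEq β] (μ : Ω → ℝ) (X : Ω → α) (Y : Ω → β) : ℝ :=
  ent μ X + ent μ Y - ent μ (fun ω => (X ω, Y ω))

/-- Conditional mutual information
`I(X:Y|Z) = H(X,Z) + H(Y,Z) - H(Z) - H(X,Y,Z)`. -/
noncomputable def condMutualInfo {Ω α β γ : Type} [Fintype Ω] [Fintype α] [Fintype β]
    [Fintype γ] [DecidableEq α] [DecidableEq β] [DecidableEq γ]
    (μ : Ω → ℝ) (X : Ω → α) (Y : Ω → β) (Z : Ω → γ) : ℝ :=
  ent μ (fun ω => (X ω, Z ω)) + ent μ (fun ω => (Y ω, Z ω)) - ent μ Z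
    - ent μ (fun ω => (X ω, Y ω, Z ω))

/-- Conditional entropy `H(X|Y) = H(X,Y) - H(Y)`. -/
noncomputable def condEnt {Ω α β : Type} [Fintype Ω] [Fintype α] [Fintype β]
    [DecidableEq α] [DecidableEq β] (μ : Ω → ℝ) (X : Ω → α) (Y : Ω → β) : ℝ :=
  ent μ (fun ω => (X ω, Y ω)) - ent μ Y



section AuxBC

lemma gibbs {ι : Type} [Fintype ι] (p q : ι → ℝ) (hp : ∀ i, 0 ≤ p i)
    (hq : ∀ i, 0 ≤ q i) (hpq : ∀ i, 0 < p i → 0 < q i) (hs : ∑ i, q i ≤ ∑ i, p i) :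
    ∑ i, p i * Real.logb 2 (q i) ≤ ∑ i, p i * Real.logb 2 (p i) := by
  rw [← sub_nonpos, ← Finset.sum_sub_distrib]
  have key : ∀ i, p i * Real.logb 2 (q i) - p i * Real.logb 2 (p i)
      ≤ (q i - p i) / Real.log 2 := by
    intro i
    rcases eq_or_lt_of_le (hp i) with h | h
    · rw [← h]
      simp
      exact div_nonneg (hq i) (Real.log_nonneg one_le_two)
    · have hqi := hpq i h
      rw [← mul_sub, Real.logb, Real.logb, ← sub_div, ← Real.log_div (ne_of_gt hqi) (ne_of_gt h),
        mul_div_assoc']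
      gcongr
      calc p i * Real.log (q i / p i) ≤ p i * (q i / p i - 1) := by
            apply mul_le_mul_of_nonneg_left (Real.log_le_sub_one_of_pos (by positivity)) (le_of_lt h)
        _ = q i - p i := by field_simp
  calc ∑ i, (p i * Real.logb 2 (q i) - p i * Real.logb 2 (p i))
      ≤ ∑ i, (q i - p i) / Real.log 2 := Finset.sum_le_sum (fun i _ => key i)
    _ = (∑ i, q i - ∑ i, p i) / Real.log 2 := by
        rw [← Finset.sum_div, Finset.sum_sub_distrib]
    _ ≤ 0 := div_nonpos_of_nonpos_of_nonneg (by linarith) (Real.log_nonneg one_le_two)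

lemma submod_pure {α β γ : Type} [Fintype α] [Fintype β] [Fintype γ]
    (p : α × β × γ → ℝ) (hp : ∀ x, 0 ≤ p x) :
    (∑ a, ∑ b, (∑ c, p (a, b, c)) * Real.logb 2 (∑ c, p (a, b, c)))
      + (∑ b, ∑ c, (∑ a, p (a, b, c)) * Real.logb 2 (∑ a, p (a, b, c)))
      ≤ (∑ b, (∑ a, ∑ c, p (a, b, c)) * Real.logb 2 (∑ a, ∑ c, p (a, b, c)))
        + ∑ x, p x * Real.logb 2 (p x) := by
  classical
  set L := Real.logb 2 with hL
  set pab : α → β → ℝ := fun a b => ∑ c, p (a, b, c) with hpab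
  set pbc : β → γ → ℝ := fun b c => ∑ a, p (a, b, c) with hpbc
  set pb : β → ℝ := fun b => ∑ a, ∑ c, p (a, b, c) with hpb
  have hpab0 : ∀ a b, 0 ≤ pab a b := fun a b => Finset.sum_nonneg fun c _ => hp _
  have hpbc0 : ∀ b c, 0 ≤ pbc b c := fun b c => Finset.sum_nonneg fun a _ => hp _
  have hpb0 : ∀ b, 0 ≤ pb b := fun b =>
    Finset.sum_nonneg fun a _ => Finset.sum_nonneg fun c _ => hp _
  have hle_ab : ∀ a b c, p (a, b, c) ≤ pab a b := fun a b c =>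
    Finset.single_le_sum (fun c _ => hp (a, b, c)) (mem_univ c)
  have hle_bc : ∀ a b c, p (a, b, c) ≤ pbc b c := fun a b c =>
    Finset.single_le_sum (fun a _ => hp (a, b, c)) (mem_univ a)
  have hle_b : ∀ a b c, p (a, b, c) ≤ pb b := fun a b c =>
    le_trans (hle_ab a b c)
      (Finset.single_le_sum (fun a _ => hpab0 a b) (mem_univ a))
  set q : α × β × γ → ℝ := fun x =>
    if pb x.2.1 = 0 then 0 else pab x.1 x.2.1 * pbc x.2.1 x.2.2 / pb x.2.1 with hq
  have hq0 : ∀ x, 0 ≤ q x := by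
    intro x
    rw [hq]; dsimp only
    split
    · exact le_refl 0
    · exact div_nonneg (mul_nonneg (hpab0 _ _) (hpbc0 _ _)) (hpb0 _)
  have hpq : ∀ x, 0 < p x → 0 < q x := by
    rintro ⟨a, b, c⟩ hx
    have hb : 0 < pb b := lt_of_lt_of_le hx (hle_b a b c)
    have ha : 0 < pab a b := lt_of_lt_of_le hx (hle_ab a b c)
    have hc : 0 < pbc b c := lt_of_lt_of_le hx (hle_bc a b c)
    rw [hq]; dsimp only
    rw [if_neg (ne_of_gt hb)]
    exact div_pos (mul_pos ha hc) hb
  have hbc_sum : ∀ b, ∑ c, pbc b c = pb b := by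
    intro b
    rw [hpb]; dsimp only
    rw [Finset.sum_comm]
  have hab_sum : ∀ b, ∑ a, pab a b = pb b := fun b => rfl
  have hql : ∀ b, ∑ a, ∑ c, q (a, b, c) ≤ ∑ a, ∑ c, p (a, b, c) := by
    intro b
    by_cases hb : pb b = 0
    · have h0 : ∑ a, ∑ c, q (a, b, c) = 0 := by
        apply Finset.sum_eq_zero; intro a _
        apply Finset.sum_eq_zero; intro c _
        rw [hq]; dsimp only; rw [if_pos hb]
      rw [h0]
      exact Finset.sum_nonneg fun a _ => Finset.sum_nonneg fun c _ => hp _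
    · have hqv : ∀ a c, q (a, b, c) = pab a b * pbc b c / pb b := by
        intro a c; rw [hq]; dsimp only; rw [if_neg hb]
      have : ∑ a, ∑ c, q (a, b, c) = pb b := by
        simp only [hqv]
        calc ∑ a, ∑ c, pab a b * pbc b c / pb b
            = (∑ a, pab a b) * (∑ c, pbc b c) / pb b := by
              simp only [Finset.sum_mul_sum, Finset.sum_div]
          _ = pb b := by rw [hab_sum b, hbc_sum b]; field_simp
      rw [this]
  have hsum : ∑ x, q x ≤ ∑ x, p x := by
    calc ∑ x, q x = ∑ a, ∑ b, ∑ c, q (a, b, c) := by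
          simp [Fintype.sum_prod_type]
      _ = ∑ b, ∑ a, ∑ c, q (a, b, c) := Finset.sum_comm
      _ ≤ ∑ b, ∑ a, ∑ c, p (a, b, c) := Finset.sum_le_sum fun b _ => hql b
      _ = ∑ a, ∑ b, ∑ c, p (a, b, c) := Finset.sum_comm
      _ = ∑ x, p x := by simp [Fintype.sum_prod_type]
  have G := gibbs p q hp hq0 hpq hsum
  have key : ∀ x : α × β × γ, p x * L (pab x.1 x.2.1) + p x * L (pbc x.2.1 x.2.2)
      - p x * L (pb x.2.1) = p x * L (q x) := by
    rintro ⟨a, b, c⟩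
    rcases eq_or_lt_of_le (hp (a, b, c)) with h | h
    · rw [← h]; ring
    · have hb : 0 < pb b := lt_of_lt_of_le h (hle_b a b c)
      have ha : 0 < pab a b := lt_of_lt_of_le h (hle_ab a b c)
      have hc : 0 < pbc b c := lt_of_lt_of_le h (hle_bc a b c)
      have hqv : q (a, b, c) = pab a b * pbc b c / pb b := by
        rw [hq]; dsimp only; rw [if_neg (ne_of_gt hb)]
      rw [hqv, hL, Real.logb_div (by positivity) (ne_of_gt hb),
        Real.logb_mul (ne_of_gt ha) (ne_of_gt hc)]
      ring
  have eab : (∑ a, ∑ b, pab a b * L (pab a b))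
      = ∑ a, ∑ b, ∑ c, p (a, b, c) * L (pab a b) := by
    refine Finset.sum_congr rfl fun a _ => Finset.sum_congr rfl fun b _ => ?_
    rw [hpab]; dsimp only; rw [Finset.sum_mul]
  have ebc : (∑ b, ∑ c, pbc b c * L (pbc b c))
      = ∑ a, ∑ b, ∑ c, p (a, b, c) * L (pbc b c) := by
    rw [Finset.sum_comm (f := fun a b => ∑ c, p (a, b, c) * L (pbc b c))]
    refine Finset.sum_congr rfl fun b _ => ?_
    rw [Finset.sum_comm]
    refine Finset.sum_congr rfl fun c _ => ?_
    rw [hpbc]; dsimp only; rw [Finset.sum_mul]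
  have eb : (∑ b, pb b * L (pb b))
      = ∑ a, ∑ b, ∑ c, p (a, b, c) * L (pb b) := by
    rw [Finset.sum_comm (f := fun a b => ∑ c, p (a, b, c) * L (pb b))]
    refine Finset.sum_congr rfl fun b _ => ?_
    rw [hpb]; dsimp only
    rw [Finset.sum_mul]
    refine Finset.sum_congr rfl fun a _ => ?_
    rw [Finset.sum_mul]
  have efinal : (∑ a, ∑ b, ∑ c, p (a, b, c) * L (pab a b))
      + (∑ a, ∑ b, ∑ c, p (a, b, c) * L (pbc b c))
      - (∑ a, ∑ b, ∑ c, p (a, b, c) * L (pb b))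
      = ∑ x, p x * L (q x) := by
    simp only [← Finset.sum_add_distrib, ← Finset.sum_sub_distrib]
    rw [show (∑ x : α × β × γ, p x * L (q x))
        = ∑ a, ∑ b, ∑ c, p (a, b, c) * L (q (a, b, c)) by
      simp [Fintype.sum_prod_type]]
    refine Finset.sum_congr rfl fun a _ => Finset.sum_congr rfl fun b _ =>
      Finset.sum_congr rfl fun c _ => ?_
    exact key (a, b, c)
  have hG2 : ∑ x, p x * L (q x) ≤ ∑ x, p x * L (p x) := G
  linarith [eab, ebc, eb, efinal, hG2]


lemma prob_nonneg {Ω α : Type} [Fintype Ω] [Fintype α] [DecidableEq α]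
    {μ : Ω → ℝ} (hμ : ∀ ω, 0 ≤ μ ω) (X : Ω → α) (x : α) : 0 ≤ prob μ X x :=
  Finset.sum_nonneg fun ω _ => by split <;> simp [hμ ω]

lemma prob_comp {Ω ι κ : Type} [Fintype Ω] [Fintype ι] [DecidableEq ι] [Fintype κ]
    [DecidableEq κ] (μ : Ω → ℝ) (V : Ω → ι) (f : ι → κ) (k : κ) :
    prob μ (fun ω => f (V ω)) k = ∑ i ∈ univ.filter (fun i => f i = k), prob μ V i := by
  unfold prob
  rw [Finset.sum_comm]
  refine Finset.sum_congr rfl fun ω _ => ?_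
  rw [Finset.sum_ite_eq (univ.filter (fun i => f i = k)) (V ω) (fun _ => μ ω)]
  simp

-- marginals of a pair
lemma prob_fst {Ω κ l : Type} [Fintype Ω] [Fintype κ] [DecidableEq κ] [Fintype l]
    [DecidableEq l] (μ : Ω → ℝ) (U : Ω → κ) (V : Ω → l) (u : κ) :
    prob μ U u = ∑ v, prob μ (fun ω => (U ω, V ω)) (u, v) := by
  unfold prob
  rw [Finset.sum_comm]
  refine Finset.sum_congr rfl fun ω _ => ?_
  simp [Prod.ext_iff, ite_and]

lemma prob_snd {Ω κ l : Type} [Fintype Ω] [Fintype κ] [DecidableEq κ] [Fintype l]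
    [DecidableEq l] (μ : Ω → ℝ) (U : Ω → κ) (V : Ω → l) (v : l) :
    prob μ V v = ∑ u, prob μ (fun ω => (U ω, V ω)) (u, v) := by
  unfold prob
  rw [Finset.sum_comm]
  refine Finset.sum_congr rfl fun ω _ => ?_
  simp [Prod.ext_iff, ite_and]

variable {Ω α' β' γ' : Type} [Fintype Ω] [Fintype α'] [Fintype β'] [Fintype γ']
  [DecidableEq α'] [DecidableEq β'] [DecidableEq γ']
  (μ : Ω → ℝ) (A : Ω → α') (B : Ω → β') (C : Ω → γ')

lemma prob_ab (a : α') (b : β') :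
    prob μ (fun ω => (A ω, B ω)) (a, b)
      = ∑ c, prob μ (fun ω => (A ω, B ω, C ω)) (a, b, c) := by
  unfold prob
  rw [Finset.sum_comm]
  refine Finset.sum_congr rfl fun ω _ => ?_
  simp [Prod.ext_iff, ite_and]

lemma prob_bc (b : β') (c : γ') :
    prob μ (fun ω => (B ω, C ω)) (b, c)
      = ∑ a, prob μ (fun ω => (A ω, B ω, C ω)) (a, b, c) := by
  unfold prob
  rw [Finset.sum_comm]
  refine Finset.sum_congr rfl fun ω _ => ?_
  simp [Prod.ext_iff, ite_and]

lemma prob_fst' {κ l : Type} [Fintype κ] [DecidableEq κ] [Fintype l]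
    [DecidableEq l] (U : Ω → κ) (V : Ω → l) (u : κ) :
    prob μ U u = ∑ v, prob μ (fun ω => (U ω, V ω)) (u, v) := by
  unfold prob
  rw [Finset.sum_comm]
  refine Finset.sum_congr rfl fun ω _ => ?_
  simp [Prod.ext_iff, ite_and]

lemma prob_b (b : β') :
    prob μ B b = ∑ a, ∑ c, prob μ (fun ω => (A ω, B ω, C ω)) (a, b, c) := by
  rw [prob_fst' μ B C b, Finset.sum_comm]
  exact Finset.sum_congr rfl fun c _ => prob_bc μ A B C b c


lemma sum_mul_logb_fiber_le {ι κ : Type} [Fintype ι] [Fintype κ] [DecidableEq κ]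
    (p : ι → ℝ) (hp : ∀ i, 0 ≤ p i) (f : ι → κ) :
    ∑ i, p i * Real.logb 2 (p i)
      ≤ ∑ k, (∑ i ∈ univ.filter (fun i => f i = k), p i)
          * Real.logb 2 (∑ i ∈ univ.filter (fun i => f i = k), p i) := by
  classical
  rw [← Finset.sum_fiberwise univ f (fun i => p i * Real.logb 2 (p i))]
  apply Finset.sum_le_sum
  intro k _
  set Q := ∑ i ∈ univ.filter (fun i => f i = k), p i with hQ
  have hQ0 : 0 ≤ Q := Finset.sum_nonneg fun i _ => hp i
  calc ∑ i ∈ univ.filter (fun i => f i = k), p i * Real.logb 2 (p i)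
      ≤ ∑ i ∈ univ.filter (fun i => f i = k), p i * Real.logb 2 Q := by
        apply Finset.sum_le_sum
        intro i hi
        rcases eq_or_lt_of_le (hp i) with h | h
        · rw [← h]; simp
        · apply mul_le_mul_of_nonneg_left _ (le_of_lt h)
          exact Real.logb_le_logb_of_le one_lt_two h
            (Finset.single_le_sum (fun j _ => hp j) hi)
    _ = Q * Real.logb 2 Q := by rw [← Finset.sum_mul]

lemma ent_comp_le {Ω ι κ : Type} [Fintype Ω] [Fintype ι] [DecidableEq ι] [Fintype κ]
    [DecidableEq κ] {μ : Ω → ℝ} (hμ0 : ∀ ω, 0 ≤ μ ω) (V : Ω → ι) (f : ι → κ) :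
    ent μ (fun ω => f (V ω)) ≤ ent μ V := by
  unfold ent
  apply neg_le_neg
  have := sum_mul_logb_fiber_le (prob μ V) (prob_nonneg hμ0 V) f
  calc ∑ i, prob μ V i * Real.logb 2 (prob μ V i)
      ≤ ∑ k, (∑ i ∈ univ.filter (fun i => f i = k), prob μ V i)
          * Real.logb 2 (∑ i ∈ univ.filter (fun i => f i = k), prob μ V i) := this
    _ = ∑ k, prob μ (fun ω => f (V ω)) k * Real.logb 2 (prob μ (fun ω => f (V ω)) k) := by
        refine Finset.sum_congr rfl fun k _ => ?_
        rw [prob_comp μ V f k]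

lemma condEnt_triangle {Ω α' β' γ' : Type} [Fintype Ω] [Fintype α'] [Fintype β']
    [Fintype γ'] [DecidableEq α'] [DecidableEq β'] [DecidableEq γ']
    (μ : Ω → ℝ) (hμ : IsPMF μ) (A : Ω → α') (B : Ω → β') (C : Ω → γ') :
    condEnt μ A C ≤ condEnt μ A B + condEnt μ B C := by
  classical
  set p : α' × β' × γ' → ℝ := prob μ (fun ω => (A ω, B ω, C ω)) with hpdef
  have hp : ∀ x, 0 ≤ p x := prob_nonneg hμ.1 _
  have hmono : ent μ (fun ω => (A ω, C ω)) ≤ ent μ (fun ω => (A ω, B ω, C ω)) :=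
    ent_comp_le hμ.1 (fun ω => (A ω, B ω, C ω)) (fun x => (x.1, x.2.2))
  have e1 : ent μ (fun ω => (A ω, B ω))
      = -∑ a, ∑ b, (∑ c, p (a, b, c)) * Real.logb 2 (∑ c, p (a, b, c)) := by
    unfold ent
    rw [Fintype.sum_prod_type]
    refine congrArg Neg.neg (Finset.sum_congr rfl fun a _ =>
      Finset.sum_congr rfl fun b _ => ?_)
    rw [prob_ab μ A B C a b]
  have e2 : ent μ (fun ω => (B ω, C ω))
      = -∑ b, ∑ c, (∑ a, p (a, b, c)) * Real.logb 2 (∑ a, p (a, b, c)) := by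
    unfold ent
    rw [Fintype.sum_prod_type]
    refine congrArg Neg.neg (Finset.sum_congr rfl fun b _ =>
      Finset.sum_congr rfl fun c _ => ?_)
    rw [prob_bc μ A B C b c]
  have e3 : ent μ B
      = -∑ b, (∑ a, ∑ c, p (a, b, c)) * Real.logb 2 (∑ a, ∑ c, p (a, b, c)) := by
    unfold ent
    refine congrArg Neg.neg (Finset.sum_congr rfl fun b _ => ?_)
    rw [prob_b μ A B C b]
  have e4 : ent μ (fun ω => (A ω, B ω, C ω))
      = -∑ x, p x * Real.logb 2 (p x) := rfl
  have hsub := submod_pure p hp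
  unfold condEnt
  rw [e1, e2, e3] at *
  rw [e4] at hmono
  linarith
end AuxBC

/-- H(X₀|Y₀) ≤ H(X₀|Y₁) + H(Y₁|X₁) + H(X₁|Y₀): the chain of conditional
entropy bounds underlying the Braunstein–Caves derivation. -/
theorem braunstein_caves_chain
    {Ω α β : Type} [Fintype Ω] [Fintype α] [Fintype β] [DecidableEq α] [DecidableEq β]
    (μ : Ω → ℝ) (hμ : IsPMF μ)
    (X0 X1 : Ω → α) (Y0 Y1 : Ω → β) :
    condEnt μ X0 Y0 ≤ condEnt μ X0 Y1 + condEnt μ Y1 X1 + condEnt μ X1 Y0 := by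
  have h1 := condEnt_triangle μ hμ X0 Y1 Y0
  have h2 := condEnt_triangle μ hμ Y1 X1 Y0
  linarith
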